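/- arXiv:2405.08043 — 3 statements merged into one kernel-verified Lean document; each statement's English description precedes it below -/
import Mathlib

section
/- Let 𝒟 be a set equipped with a symmetric neighboring relation, let N be a positive integer, let ε > 0, and let f : 𝒟 → ℝ^N be a function with L1 sensitivity at most 1, i.e., for all neighboring D, D' one has Σ_{j=1}^{N} |f(D)_j − f(D')_j| ≤ 1. Then the Laplace mechanism D ↦ f(D) + (b₁, …, b_N), where the b_j are independent random variables each distributed according to the Laplace distribution with density (ε/2)·e^{−ε|x|} on ℝ, satisfies ε-differential privacy (i.e., (ε,0)-DP). -/
open MeasureTheory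

/-- A randomized mechanism `m` on a dataset domain `𝒟` with neighboring relation
`neighbor` satisfies `(ε, δ)`-differential privacy if for all neighboring datasets
`D, D'` and all measurable output sets `Z`, `m D Z ≤ e^ε * m D' Z + δ`. -/
def IsDP {𝒟 𝒵 : Type*} [MeasurableSpace 𝒵] (neighbor : 𝒟 → 𝒟 → Prop)
    (m : 𝒟 → Measure 𝒵) (ε δ : ℝ) : Prop :=
  ∀ ⦃D D' : 𝒟⦄, neighbor D D' → ∀ ⦃Z : Set 𝒵⦄, MeasurableSet Z →
    m D Z ≤ ENNReal.ofReal (Real.exp ε) * m D' Z + ENNReal.ofReal δ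

/-- The Laplace distribution with parameter `ε > 0`: the probability measure on `ℝ`
with density `(ε/2) · e^{-ε |x|}` with respect to Lebesgue measure. -/
noncomputable def laplaceMeasure (ε : ℝ) : Measure ℝ :=
  volume.withDensity (fun x => ENNReal.ofReal (ε / 2 * Real.exp (-ε * |x|)))

/-- Tonelli for a product of one-variable functions on `ℝ^n`. -/
lemma lintegral_fin_prod_eq_prod : ∀ {n : ℕ} (g : Fin n → ℝ → ENNReal),
    (∀ i, Measurable (g i)) →
    ∫⁻ x : Fin n → ℝ, ∏ i, g i (x i) ∂(Measure.pi fun _ => (volume : Measure ℝ)) =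
      ∏ i, ∫⁻ y, g i y := by
  intro n
  induction n with
  | zero =>
      intro g _
      simp [Measure.pi_of_empty]
  | succ n ih =>
      intro g hg
      have hF : Measurable fun x : Fin (n + 1) → ℝ => ∏ i, g i (x i) :=
        Finset.measurable_prod _ fun i _ => (hg i).comp (measurable_pi_apply i)
      have h := (measurePreserving_piFinSuccAbove
        (fun _ : Fin (n + 1) => (volume : Measure ℝ)) 0).symm
      rw [← h.lintegral_comp hF]
      simp_rw [MeasurableEquiv.piFinSuccAbove_symm_apply, Fin.insertNthEquiv,
        Fin.prod_univ_succ, Fin.insertNth_zero]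
      simp only [Fin.zero_succAbove, cast_eq, Equiv.coe_fn_mk, Fin.cons_zero, Fin.cons_succ]
      have hgs : Measurable fun b : Fin n → ℝ => ∏ i : Fin n, g i.succ (b i) :=
        Finset.measurable_prod _ fun i _ => (hg i.succ).comp (measurable_pi_apply i)
      rw [lintegral_prod_mul (hg 0).aemeasurable hgs.aemeasurable,
        ih (fun i => g i.succ) (fun i => hg i.succ)]

/-- A finite product of Laplace measures is Lebesgue measure with the product density. -/
lemma pi_laplace (N : ℕ) (ε : ℝ) :
    Measure.pi (fun _ : Fin N => laplaceMeasure ε) =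
      (Measure.pi fun _ : Fin N => (volume : Measure ℝ)).withDensity
        (fun x => ∏ i, ENNReal.ofReal (ε / 2 * Real.exp (-ε * |x i|))) := by
  set g : ℝ → ENNReal := fun y => ENNReal.ofReal (ε / 2 * Real.exp (-ε * |y|)) with hgdef
  have hg : Measurable g := by
    apply Measurable.ennreal_ofReal
    fun_prop
  haveI : SigmaFinite (laplaceMeasure ε) := by
    unfold laplaceMeasure; infer_instance
  refine Measure.pi_eq fun s hs => ?_
  rw [withDensity_apply _ (MeasurableSet.univ_pi hs)]
  rw [← lintegral_indicator (MeasurableSet.univ_pi hs)]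
  have hind : ∀ x : Fin N → ℝ,
      (Set.univ.pi s).indicator (fun x => ∏ i, g (x i)) x =
        ∏ i, (s i).indicator g (x i) := by
    intro x
    by_cases hx : x ∈ Set.univ.pi s
    · rw [Set.indicator_of_mem hx]
      exact Finset.prod_congr rfl fun i _ =>
        (Set.indicator_of_mem (hx i (Set.mem_univ i)) g).symm
    · rw [Set.indicator_of_notMem hx]
      obtain ⟨i, hi⟩ : ∃ i, x i ∉ s i := by
        by_contra h
        push_neg at h
        exact hx fun i _ => h i
      exact (Finset.prod_eq_zero (Finset.mem_univ i)
        (by rw [Set.indicator_of_notMem hi])).symm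
  simp_rw [show ∀ x : Fin N → ℝ, (Set.univ.pi s).indicator
      (fun a => ∏ i, ENNReal.ofReal (ε / 2 * Real.exp (-ε * |a i|))) x =
        ∏ i, (s i).indicator g (x i) from hind]
  rw [lintegral_fin_prod_eq_prod _ fun i => hg.indicator (hs i)]
  refine Finset.prod_congr rfl fun i _ => ?_
  rw [lintegral_indicator (hs i), laplaceMeasure, withDensity_apply _ (hs i)]

lemma laplace_shift_apply (N : ℕ) (ε : ℝ) (c : Fin N → ℝ) {Z : Set (Fin N → ℝ)}
    (hZ : MeasurableSet Z) :
    (Measure.pi (fun _ : Fin N => laplaceMeasure ε)).map (fun b => c + b) Z =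
      ∫⁻ x in Z, ∏ i, ENNReal.ofReal (ε / 2 * Real.exp (-ε * |x i - c i|)) := by
  set G : (Fin N → ℝ) → ENNReal :=
    fun x => ∏ i, ENNReal.ofReal (ε / 2 * Real.exp (-ε * |x i|)) with hGdef
  have hG : Measurable G :=
    Finset.measurable_prod _ fun i _ => Measurable.ennreal_ofReal <| by
      apply Continuous.measurable; fun_prop
  have hvol : (Measure.pi fun _ : Fin N => (volume : Measure ℝ)) =
      (volume : Measure (Fin N → ℝ)) := (volume_pi ..).symm
  rw [Measure.map_apply (measurable_const_add c) hZ, pi_laplace, hvol,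
    withDensity_apply _ (hZ.preimage (measurable_const_add c)),
    ← lintegral_indicator (hZ.preimage (measurable_const_add c))]
  have hφ : Measurable (Z.indicator fun y => G (y - c)) :=
    (hG.comp (measurable_sub_const c)).indicator hZ
  have key : ∫⁻ x, ((fun b => c + b) ⁻¹' Z).indicator G x
      = ∫⁻ x, (Z.indicator fun y => G (y - c)) (c + x) := by
    refine lintegral_congr fun x => ?_
    by_cases hx : c + x ∈ Z
    · rw [Set.indicator_of_mem hx, Set.indicator_of_mem (by exact hx)]
      simp
    · rw [Set.indicator_of_notMem hx, Set.indicator_of_notMem (by exact hx)]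
  rw [key]
  have hmp : MeasurePreserving (fun x : Fin N → ℝ => c + x) volume volume :=
    measurePreserving_add_left volume c
  have hshift : ∫⁻ x, (Z.indicator fun y => G (y - c)) (c + x) ∂(volume : Measure (Fin N → ℝ))
      = ∫⁻ y, (Z.indicator fun y => G (y - c)) y ∂(volume : Measure (Fin N → ℝ)) :=
    hmp.lintegral_comp hφ
  rw [hshift, ← lintegral_indicator hZ]
  refine lintegral_congr fun y => ?_
  by_cases hy : y ∈ Z
  · rw [Set.indicator_of_mem hy, Set.indicator_of_mem hy]
    simp [hGdef]
  · rw [Set.indicator_of_notMem hy, Set.indicator_of_notMem hy]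

/-- The Laplace mechanism: if `f : 𝒟 → ℝ^N` has L1 sensitivity at most `1` on
neighboring datasets, then adding independent Laplace(`ε`) noise to each coordinate
satisfies `(ε, 0)`-differential privacy. -/
theorem laplace_mechanism_dp
    {𝒟 : Type*} (neighbor : 𝒟 → 𝒟 → Prop) (hsymm : Symmetric neighbor)
    (N : ℕ) (hN : 0 < N) (ε : ℝ) (hε : 0 < ε)
    (f : 𝒟 → (Fin N → ℝ))
    (hsens : ∀ ⦃D D' : 𝒟⦄, neighbor D D' → ∑ j : Fin N, |f D j - f D' j| ≤ 1) :
    IsDP neighbor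
      (fun D => (Measure.pi (fun _ : Fin N => laplaceMeasure ε)).map (fun b => f D + b))
      ε 0 := by
  intro D D' hDD' Z hZ
  simp only [ENNReal.ofReal_zero, add_zero]
  rw [laplace_shift_apply N ε (f D) hZ, laplace_shift_apply N ε (f D') hZ]
  have hptwise : ∀ x : Fin N → ℝ,
      ∏ i, ENNReal.ofReal (ε / 2 * Real.exp (-ε * |x i - f D i|)) ≤
        ENNReal.ofReal (Real.exp ε) *
          ∏ i, ENNReal.ofReal (ε / 2 * Real.exp (-ε * |x i - f D' i|)) := by
    intro x
    have hnn : ∀ (c : Fin N → ℝ) (i : Fin N), (0:ℝ) ≤ ε / 2 * Real.exp (-ε * |x i - c i|) :=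
      fun c i => mul_nonneg (by linarith) (Real.exp_pos _).le
    rw [← ENNReal.ofReal_prod_of_nonneg (fun i _ => hnn (f D) i),
      ← ENNReal.ofReal_prod_of_nonneg (fun i _ => hnn (f D') i),
      ← ENNReal.ofReal_mul (Real.exp_pos ε).le]
    apply ENNReal.ofReal_le_ofReal
    have hprod : ∀ c : Fin N → ℝ,
        ∏ i, ε / 2 * Real.exp (-ε * |x i - c i|) =
          (ε / 2) ^ N * Real.exp (-(ε * ∑ i, |x i - c i|)) := by
      intro c
      rw [Finset.prod_mul_distrib, Finset.prod_const, Finset.card_univ, Fintype.card_fin,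
        ← Real.exp_sum]
      congr 1
      rw [← Finset.mul_sum]
      ring_nf
    rw [hprod, hprod]
    have hA : Real.exp (-(ε * ∑ i, |x i - f D i|)) ≤
        Real.exp ε * Real.exp (-(ε * ∑ i, |x i - f D' i|)) := by
      rw [← Real.exp_add]
      apply Real.exp_le_exp.2
      have h1 : ∑ i, |x i - f D' i| - ∑ i, |x i - f D i| ≤ ∑ i, |f D i - f D' i| := by
        rw [← Finset.sum_sub_distrib]
        apply Finset.sum_le_sum
        intro i _
        have := abs_sub_abs_le_abs_sub (x i - f D' i) (x i - f D i)
        have h2 : (x i - f D' i) - (x i - f D i) = f D i - f D' i := by ring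
        rw [h2] at this
        linarith
      have h3 : ∑ i, |f D i - f D' i| ≤ 1 := hsens hDD'
      nlinarith [hε.le]
    calc (ε / 2) ^ N * Real.exp (-(ε * ∑ i, |x i - f D i|))
        ≤ (ε / 2) ^ N * (Real.exp ε * Real.exp (-(ε * ∑ i, |x i - f D' i|))) :=
          mul_le_mul_of_nonneg_left hA (by positivity)
      _ = Real.exp ε * ((ε / 2) ^ N * Real.exp (-(ε * ∑ i, |x i - f D' i|))) := by ring
  calc ∫⁻ x in Z, ∏ i, ENNReal.ofReal (ε / 2 * Real.exp (-ε * |x i - f D i|))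
      ≤ ∫⁻ x in Z, ENNReal.ofReal (Real.exp ε) *
          ∏ i, ENNReal.ofReal (ε / 2 * Real.exp (-ε * |x i - f D' i|)) :=
        lintegral_mono fun x => hptwise x
    _ = ENNReal.ofReal (Real.exp ε) *
          ∫⁻ x in Z, ∏ i, ENNReal.ofReal (ε / 2 * Real.exp (-ε * |x i - f D' i|)) :=
        lintegral_const_mul' _ _ ENNReal.ofReal_ne_top
end

section
/- Let L and R be finite sets, let up : L → R be any map, and for a finite multiset D of trajectories (finite nonempty sequences in L) define the normalized transition matrix TRAN(D) ∈ ℝ^{R × L} entrywise by TRAN(D)[r, l] = Σ_{v ∈ D} 1[∃ i, up(vᵢ) = r and v_{i+1} = l] / |v|, where |v| is the length of v. Then for any two datasets D and D' that differ by the addition or removal of a single trajectory, the L1 distance between the matrices satisfies Σ_{(r,l) ∈ R × L} |TRAN(D)[r, l] − TRAN(D')[r, l]| ≤ 1; that is, the L1 sensitivity of TRAN with respect to add/remove-one-trajectory neighboring is at most 1. -/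
open scoped Classical

/-- The trajectory `v` (a list over `L`) contains a transition from region `r`
to POI `l` if there is an index `i` with `up v[i] = r` and `v[i+1] = l`. -/
def HasTransition {L R : Type*} (up : L → R) (v : List L) (r : R) (l : L) : Prop :=
  ∃ (i : ℕ) (h : i + 1 < v.length),
    up (v.get ⟨i, by omega⟩) = r ∧ v.get ⟨i + 1, h⟩ = l

/-- The normalized transition matrix of a dataset `D` (a multiset of trajectories):
`TRAN(D)[r, l] = Σ_{v ∈ D} 1[v contains a transition from r to l] / |v|`. -/
noncomputable def TRAN {L R : Type*} (up : L → R) (D : Multiset (List L))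
    (r : R) (l : L) : ℝ :=
  (D.map (fun v => (if HasTransition up v r l then (1 : ℝ) else 0) / v.length)).sum

/-- The L1 sensitivity of the normalized transition matrix with respect to the
add/remove-one-trajectory neighboring relation is at most `1`: adding a single
(nonempty) trajectory `v` to a dataset `D` changes `TRAN` by at most `1` in the
entrywise L1 distance. -/
theorem TRAN_sensitivity_le_one
    {L R : Type*} [Fintype L] [Fintype R] (up : L → R)
    (D : Multiset (List L)) (v : List L) (hv : v ≠ []) :
    ∑ p : R × L, |TRAN up (v ::ₘ D) p.1 p.2 - TRAN up D p.1 p.2| ≤ 1 := by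
  have hlen0 : 0 < v.length := List.length_pos_iff.mpr hv
  have hlen : (0 : ℝ) < v.length := by exact_mod_cast hlen0
  have hdiff : ∀ r l, TRAN up (v ::ₘ D) r l - TRAN up D r l
      = (if HasTransition up v r l then (1 : ℝ) else 0) / v.length := by
    intro r l
    simp [TRAN, Multiset.map_cons, Multiset.sum_cons]
  have habs : ∀ p : R × L, |TRAN up (v ::ₘ D) p.1 p.2 - TRAN up D p.1 p.2|
      = (if HasTransition up v p.1 p.2 then (1 : ℝ) else 0) / v.length := by
    intro p
    rw [hdiff p.1 p.2, abs_of_nonneg]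
    positivity
  simp_rw [habs]
  rw [← Finset.sum_div]
  rw [div_le_one hlen]
  rw [Finset.sum_boole]
  have hcard : (Finset.univ.filter fun p : R × L => HasTransition up v p.1 p.2).card
      ≤ v.length := by
    classical
    set f : Fin v.length → R × L := fun i =>
      (up (v.get i), if h : (i : ℕ) + 1 < v.length then v.get ⟨(i : ℕ) + 1, h⟩ else v.get i)
      with hf
    have hsub : (Finset.univ.filter fun p : R × L => HasTransition up v p.1 p.2)
        ⊆ Finset.univ.image f := by
      intro p hp
      rw [Finset.mem_filter] at hp
      obtain ⟨i, h, h1, h2⟩ := hp.2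
      refine Finset.mem_image.mpr ⟨⟨i, by omega⟩, Finset.mem_univ _, ?_⟩
      simp only [hf]
      rw [dif_pos h]
      exact Prod.ext_iff.mpr ⟨h1, h2⟩
    calc (Finset.univ.filter fun p : R × L => HasTransition up v p.1 p.2).card
        ≤ (Finset.univ.image f).card := Finset.card_le_card hsub
      _ ≤ (Finset.univ : Finset (Fin v.length)).card := Finset.card_image_le
      _ = v.length := by simp
  exact_mod_cast hcard
end

section
/- Let m₁ and m₂ be randomized mechanisms on a common dataset domain 𝒟 with the same symmetric neighboring relation, taking values in measurable spaces 𝒵₁ and 𝒵₂ respectively, and suppose their internal randomness is independent. If m₁ satisfies (ε₁, δ₁)-differential privacy and m₂ satisfies (ε₂, δ₂)-differential privacy, then the joint mechanism D ↦ (m₁ D) ⊗ (m₂ D), which releases both outputs as the product probability measure on 𝒵₁ × 𝒵₂, satisfies (ε₁ + ε₂, δ₁ + δ₂)-differential privacy. -/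
open MeasureTheory

/-- If `μ Z ≤ c * ν Z + d` for all measurable `Z`, then the same holds for
integrals of measurable functions bounded by `1`. -/
lemma lintegral_le_of_dp {α : Type*} [MeasurableSpace α] (μ ν : Measure α)
    (c d : ENNReal) (hDP : ∀ ⦃Z : Set α⦄, MeasurableSet Z → μ Z ≤ c * ν Z + d)
    (g : α → ENNReal) (hg : Measurable g) (hg1 : ∀ x, g x ≤ 1) :
    ∫⁻ x, g x ∂μ ≤ c * ∫⁻ x, g x ∂ν + d := by
  have hF : ∀ x, ENNReal.ofReal ((g x).toReal) = g x := fun x =>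
    ENNReal.ofReal_toReal (lt_of_le_of_lt (hg1 x) ENNReal.one_lt_top).ne
  have hFm : Measurable fun x => (g x).toReal := hg.ennreal_toReal
  have hFnn : ∀ x, (0:ℝ) ≤ (g x).toReal := fun x => ENNReal.toReal_nonneg
  have hF1 : ∀ x, (g x).toReal ≤ 1 := fun x => by
    simpa using ENNReal.toReal_mono ENNReal.one_ne_top (hg1 x)
  have layer : ∀ (ρ : Measure α), ∫⁻ x, g x ∂ρ =
      ∫⁻ t in Set.Ioi (0:ℝ), ρ {a | t < (g a).toReal} := by
    intro ρ
    rw [← MeasureTheory.lintegral_eq_lintegral_meas_lt ρ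
        (Filter.Eventually.of_forall hFnn) hFm.aemeasurable]
    exact lintegral_congr fun x => (hF x).symm
  have hsetm : ∀ t : ℝ, MeasurableSet {a | t < (g a).toReal} := fun t =>
    measurableSet_lt measurable_const hFm
  have hzero : ∀ (ρ : Measure α),
      ∫⁻ t in Set.Ioi (1:ℝ), ρ {a | t < (g a).toReal} = 0 := by
    intro ρ
    have : (fun t : ℝ => ρ {a | t < (g a).toReal})
        =ᵐ[MeasureTheory.volume.restrict (Set.Ioi (1:ℝ))] 0 := by
      refine (MeasureTheory.ae_restrict_iff' measurableSet_Ioi).2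
        (Filter.Eventually.of_forall fun t ht => ?_)
      have hempty : {a | t < (g a).toReal} = ∅ := by
        ext a
        simp only [Set.mem_setOf_eq, Set.mem_empty_iff_false, iff_false, not_lt]
        exact (hF1 a).trans (le_of_lt ht)
      simp [hempty]
    rw [lintegral_congr_ae this]
    simp
  have hsplit : ∀ (ρ : Measure α), ∫⁻ t in Set.Ioi (0:ℝ), ρ {a | t < (g a).toReal} =
      ∫⁻ t in Set.Ioc (0:ℝ) 1, ρ {a | t < (g a).toReal} := by
    intro ρ
    rw [← Set.Ioc_union_Ioi_eq_Ioi (zero_le_one (α := ℝ)),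
      lintegral_union measurableSet_Ioi Set.Ioc_disjoint_Ioi_same, hzero ρ, add_zero]
  calc ∫⁻ x, g x ∂μ = ∫⁻ t in Set.Ioc (0:ℝ) 1, μ {a | t < (g a).toReal} := by
        rw [layer μ, hsplit μ]
    _ ≤ ∫⁻ t in Set.Ioc (0:ℝ) 1, (c * ν {a | t < (g a).toReal} + d) :=
        lintegral_mono fun t => hDP (hsetm t)
    _ = c * (∫⁻ t in Set.Ioc (0:ℝ) 1, ν {a | t < (g a).toReal})
        + d * MeasureTheory.volume (Set.Ioc (0:ℝ) 1) := by
        have hmt : Measurable fun t : ℝ => ν {a | t < (g a).toReal} :=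
          Antitone.measurable fun s t hst =>
            measure_mono fun a ha => lt_of_le_of_lt hst ha
        rw [lintegral_add_right _ measurable_const, lintegral_const,
          Measure.restrict_apply MeasurableSet.univ, Set.univ_inter,
          lintegral_const_mul _ hmt]
    _ ≤ c * (∫⁻ t in Set.Ioi (0:ℝ), ν {a | t < (g a).toReal}) + d := by
        have h1 : ∫⁻ t in Set.Ioc (0:ℝ) 1, ν {a | t < (g a).toReal}
            ≤ ∫⁻ t in Set.Ioi (0:ℝ), ν {a | t < (g a).toReal} :=
          lintegral_mono_set Set.Ioc_subset_Ioi_self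
        have h2 : d * MeasureTheory.volume (Set.Ioc (0:ℝ) 1) ≤ d := by
          simp [Real.volume_Ioc]
        exact add_le_add (mul_le_mul_right h1 c) h2
    _ = c * ∫⁻ x, g x ∂ν + d := by rw [← layer ν]

/-- Basic (non-adaptive) composition: if `m₁` satisfies `(ε₁, δ₁)`-DP and `m₂`
satisfies `(ε₂, δ₂)`-DP, with independent internal randomness, then the joint
mechanism `D ↦ (m₁ D) ⊗ (m₂ D)` (product measure on `𝒵₁ × 𝒵₂`) satisfies
`(ε₁ + ε₂, δ₁ + δ₂)`-DP. -/
theorem product_composition_dp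
    {𝒟 𝒵₁ 𝒵₂ : Type*} [MeasurableSpace 𝒟] [MeasurableSpace 𝒵₁] [MeasurableSpace 𝒵₂]
    (neighbor : 𝒟 → 𝒟 → Prop) (hsymm : Symmetric neighbor)
    (ε₁ ε₂ δ₁ δ₂ : ℝ) (hε₁ : 0 ≤ ε₁) (hε₂ : 0 ≤ ε₂)
    (hδ₁0 : 0 ≤ δ₁) (hδ₁1 : δ₁ ≤ 1) (hδ₂0 : 0 ≤ δ₂) (hδ₂1 : δ₂ ≤ 1)
    (m₁ : 𝒟 → Measure 𝒵₁) (m₂ : 𝒟 → Measure 𝒵₂)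
    (hm₁prob : ∀ D, IsProbabilityMeasure (m₁ D))
    (hm₂prob : ∀ D, IsProbabilityMeasure (m₂ D))
    (hm₁meas : Measurable m₁) (hm₂meas : Measurable m₂)
    (h₁ : IsDP neighbor m₁ ε₁ δ₁)
    (h₂ : IsDP neighbor m₂ ε₂ δ₂) :
    IsDP neighbor (fun D => (m₁ D).prod (m₂ D)) (ε₁ + ε₂) (δ₁ + δ₂) := by
  intro D D' hN Z hZ
  haveI := hm₁prob D; haveI := hm₁prob D'
  haveI := hm₂prob D; haveI := hm₂prob D'
  set f : 𝒵₁ → ENNReal := fun x => m₂ D (Prod.mk x ⁻¹' Z) with hf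
  set f' : 𝒵₁ → ENNReal := fun x => m₂ D' (Prod.mk x ⁻¹' Z) with hf'
  have hf'm : Measurable f' := measurable_measure_prodMk_left hZ
  set g : 𝒵₁ → ENNReal := fun x => min (ENNReal.ofReal (Real.exp ε₂) * f' x) 1 with hgdef
  have hgm : Measurable g := (measurable_const.mul hf'm).min measurable_const
  have hg1 : ∀ x, g x ≤ 1 := fun x => min_le_right _ _
  have hfg : ∀ x, f x ≤ g x + ENNReal.ofReal δ₂ := by
    intro x
    have h1 : f x ≤ ENNReal.ofReal (Real.exp ε₂) * f' x + ENNReal.ofReal δ₂ :=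
      h₂ hN (measurable_prodMk_left hZ)
    have h2 : f x ≤ 1 := prob_le_one
    rcases le_total (ENNReal.ofReal (Real.exp ε₂) * f' x) 1 with h | h
    · have : g x = ENNReal.ofReal (Real.exp ε₂) * f' x := min_eq_left h
      rw [this]; exact h1
    · have : g x = 1 := min_eq_right h
      rw [this]; exact h2.trans le_self_add
  have hL : (m₁ D).prod (m₂ D) Z = ∫⁻ x, f x ∂(m₁ D) := Measure.prod_apply hZ
  have hR : (m₁ D').prod (m₂ D') Z = ∫⁻ x, f' x ∂(m₁ D') := Measure.prod_apply hZ
  show (m₁ D).prod (m₂ D) Z ≤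
    ENNReal.ofReal (Real.exp (ε₁ + ε₂)) * ((m₁ D').prod (m₂ D')) Z
      + ENNReal.ofReal (δ₁ + δ₂)
  rw [hL, hR, Real.exp_add, ENNReal.ofReal_mul (Real.exp_nonneg ε₁),
    ENNReal.ofReal_add hδ₁0 hδ₂0]
  calc ∫⁻ x, f x ∂(m₁ D)
      ≤ ∫⁻ x, (g x + ENNReal.ofReal δ₂) ∂(m₁ D) := lintegral_mono hfg
    _ = (∫⁻ x, g x ∂(m₁ D)) + ENNReal.ofReal δ₂ := by
        rw [lintegral_add_right _ measurable_const, lintegral_const, measure_univ, mul_one]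
    _ ≤ (ENNReal.ofReal (Real.exp ε₁) * (∫⁻ x, g x ∂(m₁ D')) + ENNReal.ofReal δ₁)
        + ENNReal.ofReal δ₂ := by
        gcongr
        exact lintegral_le_of_dp _ _ _ _ (fun W hW => h₁ hN hW) g hgm hg1
    _ ≤ (ENNReal.ofReal (Real.exp ε₁) *
          (ENNReal.ofReal (Real.exp ε₂) * ∫⁻ x, f' x ∂(m₁ D')) + ENNReal.ofReal δ₁)
        + ENNReal.ofReal δ₂ := by
        gcongr
        calc ∫⁻ x, g x ∂(m₁ D')
            ≤ ∫⁻ x, ENNReal.ofReal (Real.exp ε₂) * f' x ∂(m₁ D') :=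
              lintegral_mono fun x => min_le_left _ _
          _ = ENNReal.ofReal (Real.exp ε₂) * ∫⁻ x, f' x ∂(m₁ D') :=
              lintegral_const_mul _ hf'm
    _ = ENNReal.ofReal (Real.exp ε₁) * ENNReal.ofReal (Real.exp ε₂) *
          (∫⁻ x, f' x ∂(m₁ D')) + (ENNReal.ofReal δ₁ + ENNReal.ofReal δ₂) := by
        ring
end
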